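/- arXiv:1710.04510 — 4 statements merged into one kernel-verified Lean document; each statement's English description precedes it below -/
import Mathlib

section
/- Let U_s be an admissible shear flow and define Φ_inv(μ) := (μ − 1) ∫₀^∞ F(y)/(μ − U_s(y))² dy with F(y) := 1 − U_s(y) + y U_s'(y). Then (i) the map μ ↦ Φ_inv(μ) is holomorphic on ℂ ∖ [0,1], and (ii) for every μ = a + ib with b > 0 and b² ≥ a(1−a), one has Im Φ_inv(μ) < 0. -/
open MeasureTheory Filter Set

noncomputable section

/-- The source term `F(y) = 1 - U(y) + y U'(y)` of the eigenmode ODE. -/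
def srcF (U : ℝ → ℝ) (y : ℝ) : ℝ := 1 - U y + y * deriv U y

/-- The displacement thickness `Δ_s = ∫₀^∞ (1 - U)`. -/
def deltaS (U : ℝ → ℝ) : ℝ := ∫ y in Ioi (0:ℝ), (1 - U y)

/-- An admissible shear flow: smooth, monotone, `U(0) = 0`, `U → 1`,
`U''(0) ≠ 0`, finitely many inflexion points, and the decay conditions of the paper. -/
structure AdmissibleShearFlow (U : ℝ → ℝ) : Prop where
  smooth : ContDiff ℝ (⊤ : ℕ∞) U
  mem_Ico : ∀ y, 0 ≤ y → U y ∈ Ico (0:ℝ) 1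
  zero_val : U 0 = 0
  deriv_pos : ∀ y, 0 ≤ y → 0 < deriv U y
  tendsto_one : Tendsto U atTop (nhds 1)
  snd_deriv_zero_ne : iteratedDeriv 2 U 0 ≠ 0
  finite_inflexions : {y : ℝ | 0 < y ∧ iteratedDeriv 2 U y = 0}.Finite
  integrable_defect : IntegrableOn (fun y => 1 - U y) (Ioi (0:ℝ))
  derivs_bounded : ∀ j : ℕ, 1 ≤ j → j ≤ 3 →
    ∃ M : ℝ, ∀ y, 0 ≤ y → |iteratedDeriv j U y| ≤ M
  decay_ratio₁ : Tendsto (fun y => (1 - U y) ^ 2 / deriv U y) atTop (nhds 0)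
  decay_ratio₂ : Tendsto (fun y => y * (1 - U y)) atTop (nhds 0)
  decay_ratio₃ : IntegrableOn
    (fun y => (1 - U y) ^ 2 * iteratedDeriv 2 U y / (deriv U y) ^ 2) (Ioi (0:ℝ))
  kappa_decay : ∃ κ : ℝ, 0 < κ ∧ κ < 1/2 ∧ ∃ yκ > (0:ℝ), ∃ cκ > (0:ℝ),
    ∀ y, yκ ≤ y →
      (1 - U y) ^ ((2:ℝ) - κ) * iteratedDeriv 2 U y ≤ -cκ * (deriv U y) ^ 3

/-- `φ` is a smooth solution of the eigenmode problem
`(μ - U_s)φ' + U_s'φ - (i/k)φ''' = F`, `φ(0) = 0`, `φ'(0) = 1`, `φ' → 0`, `φ → L`. -/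
def IsEigSolution (U : ℝ → ℝ) (μ : ℂ) (k : ℝ) (L : ℂ) (φ : ℝ → ℂ) : Prop :=
  ContDiff ℝ (⊤ : ℕ∞) φ ∧
  (∀ y, 0 ≤ y →
    (μ - (U y : ℂ)) * deriv φ y + ((deriv U y : ℝ) : ℂ) * φ y
      - Complex.I / (k : ℂ) * iteratedDeriv 3 φ y = (srcF U y : ℂ)) ∧
  φ 0 = 0 ∧ deriv φ 0 = 1 ∧
  Tendsto (deriv φ) atTop (nhds 0) ∧
  Tendsto φ atTop (nhds L)

/-- Same problem without the prescribed limit at infinity. -/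
def IsBLSolution (U : ℝ → ℝ) (μ : ℂ) (k : ℝ) (φ : ℝ → ℂ) : Prop :=
  ContDiff ℝ (⊤ : ℕ∞) φ ∧
  (∀ y, 0 ≤ y →
    (μ - (U y : ℂ)) * deriv φ y + ((deriv U y : ℝ) : ℂ) * φ y
      - Complex.I / (k : ℂ) * iteratedDeriv 3 φ y = (srcF U y : ℂ)) ∧
  φ 0 = 0 ∧ deriv φ 0 = 1 ∧ Tendsto (deriv φ) atTop (nhds 0)

/-- Cauchy principal value `PV ∫₀¹ h(u)/(u - a) du`. -/
def pvIntegral (h : ℝ → ℝ) (a : ℝ) : ℝ :=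
  limUnder (nhdsWithin (0:ℝ) (Ioi 0))
    (fun ε => ∫ u in Ioo (0:ℝ) 1 \ Ioo (a - ε) (a + ε), h u / (u - a))

/-- Inverse of the shear flow on `[0, ∞)`. -/
def shearInv (U : ℝ → ℝ) (u : ℝ) : ℝ := Function.invFunOn U (Ici 0) u

/-- `g(u) = (1-u)² U''(U⁻¹(u)) / (U'(U⁻¹(u)))³`. -/
def gfun (U : ℝ → ℝ) (u : ℝ) : ℝ :=
  (1 - u) ^ 2 * iteratedDeriv 2 U (shearInv U u) / (deriv U (shearInv U u)) ^ 3

/-- `G(a) = 1/(a U'(0)) + PV ∫₀¹ g(u)/(u-a) du + iπ g(a)`. -/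
def Gfun (U : ℝ → ℝ) (a : ℝ) : ℂ :=
  ((1 / (a * deriv U 0) + pvIntegral (gfun U) a : ℝ) : ℂ)
    + Complex.I * ((Real.pi * gfun U a : ℝ) : ℂ)

/-- Crossing abscissa `χ(y) = Re G(U(y))`. -/
def chiAbscissa (U : ℝ → ℝ) (y : ℝ) : ℝ := (Gfun U (U y)).re

/-- `ξ(γ)`: number of zeros of `U''` in `(0,∞)` with `χ(yᵢ) = γ`. -/
def xiEq (U : ℝ → ℝ) (γ : ℝ) : ℕ :=
  {y : ℝ | 0 < y ∧ iteratedDeriv 2 U y = 0 ∧ chiAbscissa U y = γ}.ncard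

/-- `ξ₊(γ)`: zeros of `U''` with `χ(yᵢ) < γ`, `U'' < 0` on the left and `U'' > 0`
on the right. -/
def xiPlus (U : ℝ → ℝ) (γ : ℝ) : ℕ :=
  {y : ℝ | 0 < y ∧ iteratedDeriv 2 U y = 0 ∧ chiAbscissa U y < γ ∧
    ∃ δ > (0:ℝ), (∀ z ∈ Ioo (y - δ) y, iteratedDeriv 2 U z < 0) ∧
      (∀ z ∈ Ioo y (y + δ), 0 < iteratedDeriv 2 U z)}.ncard

/-- `ξ₋(γ)`: zeros of `U''` with `χ(yᵢ) < γ`, `U'' > 0` on the left and `U'' < 0`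
on the right. -/
def xiMinus (U : ℝ → ℝ) (γ : ℝ) : ℕ :=
  {y : ℝ | 0 < y ∧ iteratedDeriv 2 U y = 0 ∧ chiAbscissa U y < γ ∧
    ∃ δ > (0:ℝ), (∀ z ∈ Ioo (y - δ) y, 0 < iteratedDeriv 2 U z) ∧
      (∀ z ∈ Ioo y (y + δ), iteratedDeriv 2 U z < 0)}.ncard

/-- `Φ_inv(μ) = (μ - 1) ∫₀^∞ F(y)/(μ - U(y))² dy`. -/
def PhiInv (U : ℝ → ℝ) (μ : ℂ) : ℂ :=
  (μ - 1) * ∫ y in Ioi (0:ℝ), (srcF U y : ℂ) / (μ - (U y : ℂ)) ^ 2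

/-- A weight function `ω ≥ 1` with `C_ω < ∞`. -/
structure WeightFn (ω : ℝ → ℝ) : Prop where
  pos : ∀ y, 0 ≤ y → 0 < ω y
  contDiff : ContDiff ℝ 1 ω
  one_le : ∀ y, 0 ≤ y → 1 ≤ ω y
  integrable_inv : IntegrableOn (fun y => 1 / ω y) (Ioi (0:ℝ))
  deriv_ratio_bdd : ∃ M : ℝ, ∀ y, 0 ≤ y → |deriv ω y / ω y| ≤ M
  log_ratio_bdd : ∃ M : ℝ, ∀ y, 0 ≤ y → Real.log (ω y) / (1 + y) ≤ M

/-- Weighted decay conditions: `(1-U_s) ∈ L²(ω)` and `(1+y)U_s^{(j)} ∈ L²(ω)`, `j = 1,2,3`. -/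
def WeightedDecay (U ω : ℝ → ℝ) : Prop :=
  IntegrableOn (fun y => (1 - U y) ^ 2 * ω y) (Ioi (0:ℝ)) ∧
  ∀ j : ℕ, 1 ≤ j → j ≤ 3 →
    IntegrableOn (fun y => ((1 + y) * iteratedDeriv j U y) ^ 2 * ω y) (Ioi (0:ℝ))

/-- Membership in the weighted space `L²(ω)`. -/
def MemL2w (ω : ℝ → ℝ) (f : ℝ → ℂ) : Prop :=
  IntegrableOn (fun y => ‖f y‖ ^ 2 * ω y) (Ioi (0:ℝ))

/-- The `L²(ω)` norm. -/
def wNorm (ω : ℝ → ℝ) (f : ℝ → ℂ) : ℝ :=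
  Real.sqrt (∫ y in Ioi (0:ℝ), ‖f y‖ ^ 2 * ω y)

/-- `φ` solves the homogeneous-boundary-conditions resolvent problem with forcing `f`. -/
def SolvesHom (U : ℝ → ℝ) (μ : ℂ) (k : ℝ) (f φ : ℝ → ℂ) : Prop :=
  ContDiff ℝ 2 φ ∧
  (∀ᵐ y ∂(volume.restrict (Ioi (0:ℝ))),
    (μ - (U y : ℂ)) * deriv φ y + ((deriv U y : ℝ) : ℂ) * φ y
      - Complex.I / (k : ℂ) * iteratedDeriv 3 φ y = f y) ∧
  φ 0 = 0 ∧ deriv φ 0 = 0 ∧ Tendsto (deriv φ) atTop (nhds 0)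

/-- Parameterization on `[0,1]` of the contour `C_η`: the segment from `iη` to `1 + iη`
followed by the upper half-circle of radius `1/2` centered at `1/2 + iη`. -/
def Ceta (η : ℝ) (t : ℝ) : ℂ :=
  if t ≤ 1/2 then ((2*t : ℝ) : ℂ) + (η : ℂ) * Complex.I
  else (1/2 : ℂ) + (η : ℂ) * Complex.I
    + (1/2 : ℂ) * Complex.exp (((Real.pi * (2*t - 1) : ℝ)) * Complex.I)

/-- Winding number `(1/2πi) ∮ dz/(z - p)` of a closed curve parameterized on `[0,1]`. -/
def windingNumber (c : ℝ → ℂ) (p : ℂ) : ℂ :=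
  (((2 * Real.pi : ℝ) : ℂ) * Complex.I)⁻¹ * ∫ t in (0:ℝ)..1, deriv c t / (c t - p)

/-- `q_μ(x) = |μ - x|⁴ - (2μ - 1 - x)(μ̄ - x)²`. -/
def qmu (μ : ℂ) (x : ℝ) : ℂ :=
  ((‖μ - (x:ℂ)‖ ^ 4 : ℝ) : ℂ) - (2*μ - 1 - (x:ℂ)) * ((starRingEnd ℂ) μ - (x:ℂ))^2

/-- `f(α) = -2iΔ_s/α + 1/√α`, principal square root (positive real part for `Re α > 0`). -/
def fIBL (Δ : ℝ) (α : ℂ) : ℂ := (-2 * Complex.I * (Δ:ℂ)) / α + 1 / (α ^ (1/2 : ℂ))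

/-!
For `μ` off the segment `[0, 1]` the integrand `F / (μ - U)²` is bounded, locally uniformly in
`μ`, by a multiple of the integrable function `F`, so `Φ_inv` can be differentiated under the
integral sign.

For the sign, an integration by parts rewrites `Φ_inv(μ)` as
`∫₀^∞ (1 - U) (2μ - 1 - U) / (μ - U)²`. For `μ = a + ib`, the imaginary part of this integrand is
`-2b (1 - U) (b² - (1 - a)(a - U)) / |μ - U|⁴`, and for `0 < U < 1` the condition
`b² ≥ a (1 - a)` makes `b² - (1 - a)(a - U)` positive.
-/

open Topology

theorem exists_le_dist_of_notMem_of_isClosed {X : Type*} [PseudoMetricSpace X] {K : Set X}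
    (hK : IsClosed K) {x₀ : X} (hx₀ : x₀ ∉ K) :
    ∃ δ > 0, ∀ x ∈ Metric.ball x₀ δ, ∀ w ∈ K, δ ≤ dist x w := by
  obtain ⟨ε, hε, hball⟩ := Metric.isOpen_iff.1 hK.isOpen_compl x₀ hx₀
  refine ⟨ε / 2, by positivity, fun x hx w hw => ?_⟩
  by_contra! hlt
  refine hball ?_ hw
  rw [Metric.mem_ball] at hx ⊢
  linarith [dist_triangle w x x₀, dist_comm x w]

theorem hasDerivAt_div_sub_pow {𝕜 : Type*} [NontriviallyNormedField 𝕜] (c w z : 𝕜) (n : ℕ)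
    (hz : z - w ≠ 0) :
    HasDerivAt (fun z => c / (z - w) ^ n) (-n * c / (z - w) ^ (n + 1)) z := by
  refine ((hasDerivAt_const z c).div (((hasDerivAt_id z).sub_const w).fun_pow n)
    (pow_ne_zero n hz)).congr_deriv ?_
  rcases n with _ | m
  · simp
  · simp only [id, Nat.cast_add, Nat.cast_one, Nat.add_sub_cancel, mul_one]
    field_simp
    ring

section CauchyTypeIntegral

variable {α : Type*} [MeasurableSpace α] {μ : Measure α}

theorem MeasureTheory.Integrable.div_pow_of_le_norm {f g : α → ℂ} (hf : Integrable f μ)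
    (hg : AEStronglyMeasurable g μ) {δ : ℝ} (hδ : 0 < δ) (hgδ : ∀ᵐ x ∂μ, δ ≤ ‖g x‖) (n : ℕ) :
    Integrable (fun x => f x / g x ^ n) μ := by
  simp_rw [div_eq_mul_inv]
  refine hf.mul_bdd (c := (δ ^ n)⁻¹) (hg.pow n).inv₀ (hgδ.mono fun x hx => ?_)
  rw [norm_inv, norm_pow]
  exact inv_anti₀ (pow_pos hδ n) (pow_le_pow_left₀ hδ.le hx n)

theorem differentiableOn_integral_div_sub_pow {f u : α → ℂ} (hf : Integrable f μ)
    (hu : AEStronglyMeasurable u μ) {K : Set ℂ} (hK : IsClosed K) (huK : ∀ᵐ x ∂μ, u x ∈ K)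
    (n : ℕ) : DifferentiableOn ℂ (fun z => ∫ x, f x / (z - u x) ^ n ∂μ) Kᶜ := by
  intro z₀ hz₀
  obtain ⟨δ, hδ, hsep⟩ := exists_le_dist_of_notMem_of_isClosed hK hz₀
  have hint : ∀ z ∈ Metric.ball z₀ δ, ∀ m : ℕ, Integrable (fun x => f x / (z - u x) ^ m) μ :=
    fun z hz m => hf.div_pow_of_le_norm (aestronglyMeasurable_const.sub hu) hδ
      (huK.mono fun x hx => dist_eq_norm z (u x) ▸ hsep z hz _ hx) m
  have hz₀δ := Metric.mem_ball_self hδ (x := z₀)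
  refine (hasDerivAt_integral_of_dominated_loc_of_deriv_le (Metric.ball_mem_nhds z₀ hδ)
    (eventually_of_mem (Metric.ball_mem_nhds z₀ hδ) fun z hz =>
      (hint z hz n).aestronglyMeasurable)
    (hint z₀ hz₀δ n) (F' := fun z x => -n * f x / (z - u x) ^ (n + 1)) ?_ ?_
    (hf.norm.const_mul (n / δ ^ (n + 1))) ?_).2.differentiableAt.differentiableWithinAt
  · simpa only [mul_div_assoc] using
      ((hint z₀ hz₀δ (n + 1)).const_mul (-n : ℂ)).aestronglyMeasurable
  · filter_upwards [huK] with x hx z hz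
    have hδz : δ ≤ ‖z - u x‖ := dist_eq_norm z (u x) ▸ hsep z hz _ hx
    rw [norm_div, norm_mul, norm_pow, norm_neg, Complex.norm_natCast, div_mul_eq_mul_div]
    gcongr
  · filter_upwards [huK] with x hx z hz
    refine hasDerivAt_div_sub_pow _ _ _ n (norm_pos_iff.1 ?_)
    exact hδ.trans_le (dist_eq_norm z (u x) ▸ hsep z hz _ hx)

end CauchyTypeIntegral

theorem setIntegral_neg_of_forall_neg {X : Type*} [MeasurableSpace X] {μ : Measure X} {s : Set X}
    {f : X → ℝ} (hs : MeasurableSet s) (hμs : μ s ≠ 0) (hfi : IntegrableOn f s μ)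
    (hf : ∀ x ∈ s, f x < 0) : ∫ x in s, f x ∂μ < 0 := by
  have hpos : 0 < ∫ x in s, -f x ∂μ := by
    rw [setIntegral_pos_iff_support_of_nonneg_ae
      ((ae_restrict_iff' hs).2 (Eventually.of_forall fun x hx => (neg_pos.2 (hf x hx)).le)) hfi.neg]
    refine (pos_iff_ne_zero.2 hμs).trans_le (measure_mono fun x hx => ⟨?_, hx⟩)
    exact neg_ne_zero.2 (hf x hx).ne
  rwa [integral_neg, neg_pos] at hpos

theorem im_two_mul_sub_div_sub_sq (μ : ℂ) (x : ℝ) :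
    ((2 * μ - 1 - x) / (μ - x) ^ 2).im
      = -2 * μ.im * (μ.im ^ 2 - (1 - μ.re) * (μ.re - x)) / ((μ.re - x) ^ 2 + μ.im ^ 2) ^ 2 := by
  simp only [pow_two, Complex.div_im, Complex.sub_im, Complex.mul_im, Complex.re_ofNat,
    Complex.im_ofNat, zero_mul, add_zero, Complex.one_im, sub_zero, Complex.ofReal_im,
    Complex.mul_re, Complex.sub_re, Complex.ofReal_re, Complex.normSq, MonoidWithZeroHom.coe_mk,
    ZeroHom.coe_mk, Complex.one_re, neg_mul]
  field_simp
  ring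

theorem im_mul_two_mul_sub_div_sub_sq_neg {μ : ℂ} (hμ : 0 < μ.im)
    (hμ' : μ.re * (1 - μ.re) ≤ μ.im ^ 2) {x : ℝ} (hx₀ : 0 < x) (hx₁ : x < 1) :
    ((1 - x : ℝ) * ((2 * μ - 1 - x) / (μ - x) ^ 2)).im < 0 := by
  rw [Complex.im_ofReal_mul, im_two_mul_sub_div_sub_sq]
  have hP : 0 < μ.im ^ 2 - (1 - μ.re) * (μ.re - x) := by
    rcases le_or_gt 1 μ.re with h | h
    · nlinarith [mul_nonneg (sub_nonneg.2 h) (by linarith : 0 ≤ μ.re - x)]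
    · nlinarith [mul_pos hx₀ (sub_pos.2 h)]
  refine mul_neg_of_pos_of_neg (sub_pos.2 hx₁) (div_neg_of_neg_of_pos ?_ (by positivity))
  nlinarith [mul_pos hμ hP]

theorem sub_one_ne_zero_of_notMem_image_Icc {μ : ℂ} (hμ : μ ∉ Complex.ofReal '' Icc 0 1) :
    μ - 1 ≠ 0 := fun h =>
  hμ ⟨1, right_mem_Icc.2 zero_le_one, by rw [sub_eq_zero.1 h, Complex.ofReal_one]⟩

namespace AdmissibleShearFlow

variable {U : ℝ → ℝ} (hU : AdmissibleShearFlow U)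
include hU

theorem continuous : Continuous U := hU.smooth.continuous

theorem hasDerivAt (y : ℝ) : HasDerivAt U (deriv U y) y :=
  (hU.smooth.differentiable (by norm_num) y).hasDerivAt

theorem pos_of_pos {y : ℝ} (hy : 0 < y) : 0 < U y := by
  have hmono : StrictMonoOn U (Ici 0) :=
    strictMonoOn_of_deriv_pos (convex_Ici 0) hU.continuous.continuousOn
      fun x hx => hU.deriv_pos x (interior_subset hx)
  simpa [hU.zero_val] using hmono self_mem_Ici hy.le hy

theorem tendsto_mul_sub_one : Tendsto (fun y => y * (U y - 1)) atTop (𝓝 0) := by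
  have h := hU.decay_ratio₂.neg
  rw [neg_zero] at h
  exact h.congr fun y => by ring

/-- `y U'` is the derivative of `y (U - 1) + ∫₀^y (1 - U)`, which is monotone with limit `Δ_s`. -/
theorem integrableOn_mul_deriv : IntegrableOn (fun y => y * deriv U y) (Ioi 0) := by
  have hcont : Continuous fun y => 1 - U y := continuous_const.sub hU.continuous
  refine integrableOn_Ioi_deriv_of_nonneg' (l := 0 + deltaS U)
    (g := fun y => y * (U y - 1) + ∫ t in (0:ℝ)..y, (1 - U t)) (fun y _ => ?_)
    (fun y hy => mul_nonneg (le_of_lt hy) (hU.deriv_pos y (le_of_lt hy)).le) ?_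
  · refine (((hasDerivAt_id' y).mul ((hU.hasDerivAt y).sub_const 1)).add
      (hcont.integral_hasStrictDerivAt 0 y).hasDerivAt).congr_deriv ?_
    linarith
  · exact hU.tendsto_mul_sub_one.add
      (intervalIntegral_tendsto_integral_Ioi 0 hU.integrable_defect tendsto_id)

theorem integrableOn_srcF : IntegrableOn (srcF U) (Ioi 0) :=
  hU.integrable_defect.add hU.integrableOn_mul_deriv

theorem ofReal_mem_image_Icc {y : ℝ} (hy : 0 ≤ y) : (U y : ℂ) ∈ Complex.ofReal '' Icc 0 1 :=
  ⟨U y, ⟨(hU.mem_Ico y hy).1, (hU.mem_Ico y hy).2.le⟩, rfl⟩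

section OffSegment

variable {μ : ℂ} (hμ : μ ∉ Complex.ofReal '' Icc 0 1)
include hμ

theorem exists_le_norm_sub : ∃ δ > 0, ∀ y, 0 ≤ y → δ ≤ ‖μ - U y‖ := by
  obtain ⟨δ, hδ, hsep⟩ := exists_le_dist_of_notMem_of_isClosed
    ((isCompact_Icc.image Complex.continuous_ofReal).isClosed) hμ
  exact ⟨δ, hδ, fun y hy =>
    dist_eq_norm μ (U y) ▸ hsep μ (Metric.mem_ball_self hδ) _ (hU.ofReal_mem_image_Icc hy)⟩

theorem sub_apply_ne_zero {y : ℝ} (hy : 0 ≤ y) : μ - U y ≠ 0 := by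
  obtain ⟨δ, hδ, hsep⟩ := hU.exists_le_norm_sub hμ
  exact norm_pos_iff.1 (hδ.trans_le (hsep y hy))

theorem integrableOn_div_sub_pow {g : ℝ → ℝ} (hg : IntegrableOn g (Ioi 0)) (n : ℕ) :
    IntegrableOn (fun y => (g y : ℂ) / (μ - U y) ^ n) (Ioi 0) := by
  obtain ⟨δ, hδ, hsep⟩ := hU.exists_le_norm_sub hμ
  exact hg.ofReal.div_pow_of_le_norm
    (continuous_const.sub (Complex.continuous_ofReal.comp hU.continuous)).aestronglyMeasurable hδ
    ((ae_restrict_iff' measurableSet_Ioi).2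
      (Eventually.of_forall fun y hy => hsep y (le_of_lt hy))) n

/-- Integration by parts against `y / (μ - U) - y / (μ - 1)`, which vanishes at `0` and,
by `y (1 - U) → 0`, at infinity. -/
theorem integral_mul_deriv_div_sub_sq :
    ∫ y in Ioi 0, ((y * deriv U y : ℝ) : ℂ) / (μ - U y) ^ 2
      = ∫ y in Ioi 0, ((1 - U y : ℝ) : ℂ) / (μ - U y) / (μ - 1) := by
  have hne : ∀ y : ℝ, 0 ≤ y → μ - U y ≠ 0 := fun y hy => hU.sub_apply_ne_zero hμ hy
  have hne1 := sub_one_ne_zero_of_notMem_image_Icc hμ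
  have hA := hU.integrableOn_div_sub_pow hμ hU.integrableOn_mul_deriv 2
  have hB := (hU.integrableOn_div_sub_pow hμ hU.integrable_defect 1).div_const (μ - 1)
  simp only [pow_one] at hB
  rw [← sub_eq_zero, ← integral_sub hA hB]
  refine (integral_Ioi_of_hasDerivAt_of_tendsto' (m := 0)
    (f := fun y : ℝ => y / (μ - U y) - y / (μ - 1)) (fun y hy => ?_) (hA.sub hB) ?_).trans
    (by simp)
  · have hid : HasDerivAt (fun t : ℝ => (t : ℂ)) 1 y := (hasDerivAt_id y).ofReal_comp
    refine ((hid.fun_div ((hU.hasDerivAt y).ofReal_comp.const_sub μ) (hne y hy)).sub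
      (hid.div_const (μ - 1))).congr_deriv ?_
    rw [Pi.sub_apply]
    push_cast
    field_simp [hne y hy, hne1]
    ring
  · have hlim : Tendsto (fun y => ((y * (U y - 1) : ℝ) : ℂ) / ((μ - U y) * (μ - 1))) atTop
        (𝓝 (((0 : ℝ) : ℂ) / ((μ - (1 : ℝ)) * (μ - 1)))) := by
      refine (Complex.continuous_ofReal.tendsto _).comp hU.tendsto_mul_sub_one |>.div
        (((Complex.continuous_ofReal.tendsto _).comp hU.tendsto_one).const_sub μ |>.mul_const _)
        (by simpa using mul_ne_zero hne1 hne1)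
    simp only [Complex.ofReal_zero, zero_div] at hlim
    refine hlim.congr' ((eventually_ge_atTop 0).mono fun y hy => ?_)
    push_cast
    field_simp [hne y hy, hne1]
    ring

theorem phiInv_integrand_eq {y : ℝ} (hy : 0 ≤ y) :
    (μ - 1) * ((1 - U y : ℝ) / (μ - U y) ^ 2 + (1 - U y : ℝ) / (μ - U y) / (μ - 1))
      = (1 - U y : ℝ) * ((2 * μ - 1 - U y) / (μ - U y) ^ 2) := by
  field_simp [hU.sub_apply_ne_zero hμ hy, sub_one_ne_zero_of_notMem_image_Icc hμ]
  ring

theorem integrableOn_phiInv_integrand :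
    IntegrableOn (fun y => ((1 - U y : ℝ) : ℂ) * ((2 * μ - 1 - U y) / (μ - U y) ^ 2))
      (Ioi 0) := by
  refine IntegrableOn.congr_fun (((hU.integrableOn_div_sub_pow hμ hU.integrable_defect 2).add
    ((hU.integrableOn_div_sub_pow hμ hU.integrable_defect 1).div_const (μ - 1))).const_mul
      (μ - 1)) (fun y hy => ?_) measurableSet_Ioi
  simpa using hU.phiInv_integrand_eq hμ (le_of_lt hy)

theorem phiInv_eq_integral :
    PhiInv U μ = ∫ y in Ioi 0, ((1 - U y : ℝ) : ℂ) * ((2 * μ - 1 - U y) / (μ - U y) ^ 2) := by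
  have hsplit : ∀ y, (srcF U y : ℂ) / (μ - U y) ^ 2
      = ((1 - U y : ℝ) : ℂ) / (μ - U y) ^ 2 + ((y * deriv U y : ℝ) : ℂ) / (μ - U y) ^ 2 := by
    intro y
    simp only [srcF]
    push_cast
    ring
  have hB := (hU.integrableOn_div_sub_pow hμ hU.integrable_defect 1).div_const (μ - 1)
  simp only [pow_one] at hB
  rw [PhiInv, funext hsplit, integral_add (hU.integrableOn_div_sub_pow hμ hU.integrable_defect 2)
    (hU.integrableOn_div_sub_pow hμ hU.integrableOn_mul_deriv 2),
    hU.integral_mul_deriv_div_sub_sq hμ, ← integral_add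
    (hU.integrableOn_div_sub_pow hμ hU.integrable_defect 2) hB, ← integral_const_mul]
  exact setIntegral_congr_fun measurableSet_Ioi fun y hy => hU.phiInv_integrand_eq hμ (le_of_lt hy)

end OffSegment

end AdmissibleShearFlow

/-- Lemma (holomorphy of `Φ_inv` off `[0,1]` and location of possible roots). -/
theorem phiInv_holomorphic_and_negative_im (U : ℝ → ℝ)
    (hU : AdmissibleShearFlow U) :
    DifferentiableOn ℂ (PhiInv U) ((fun x : ℝ => (x : ℂ)) '' Icc (0:ℝ) 1)ᶜ ∧
    ∀ a b : ℝ, 0 < b → a * (1 - a) ≤ b ^ 2 →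
      (PhiInv U ((a : ℂ) + (b : ℂ) * Complex.I)).im < 0 := by
  constructor
  · have hUK : ∀ᵐ y ∂(volume.restrict (Ioi (0:ℝ))), (U y : ℂ) ∈ Complex.ofReal '' Icc 0 1 :=
      (ae_restrict_iff' measurableSet_Ioi).2
        (Eventually.of_forall fun y hy => hU.ofReal_mem_image_Icc (le_of_lt hy))
    exact (differentiableOn_id.sub_const 1).mul
      (differentiableOn_integral_div_sub_pow hU.integrableOn_srcF.ofReal
        (Complex.continuous_ofReal.comp hU.continuous).aestronglyMeasurable
        (isCompact_Icc.image Complex.continuous_ofReal).isClosed hUK 2)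
  · intro a b hb hab
    set μ : ℂ := a + b * Complex.I
    have hμ : μ ∉ Complex.ofReal '' Icc 0 1 := fun ⟨x, _, hx⟩ =>
      hb.ne (by simpa [μ] using congrArg Complex.im hx)
    rw [hU.phiInv_eq_integral hμ, ← RCLike.im_to_complex,
      ← integral_im (hU.integrableOn_phiInv_integrand hμ)]
    refine setIntegral_neg_of_forall_neg measurableSet_Ioi (by simp)
      (hU.integrableOn_phiInv_integrand hμ).im fun y hy => ?_
    exact im_mul_two_mul_sub_div_sub_sq_neg (by simpa [μ] using hb) (by simpa [μ] using hab)
      (hU.pos_of_pos hy) (hU.mem_Ico y (le_of_lt hy)).2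

end
end

section
/- Let μ = a + ib ∈ Γ₁ := {a + ib ∈ ℂ : 0 < a < 1, 0 < b < √(3a(1−a)²/(4−3a))}. Define q_μ(x) := |μ − x|⁴ − (2μ − 1 − x)(μ̄ − x)² for x ∈ [0,1], where μ̄ is the complex conjugate of μ. Then there exist 0 ≤ x₁ < x₂ < x₃ ≤ 1 such that { α₁ q_μ(x₁) + α₂ q_μ(x₂) + α₃ q_μ(x₃) : (α₁, α₂, α₃) ∈ [0,∞)³ } = ℂ. -/
open MeasureTheory Filter Set

noncomputable section

/-!
Writing `cross v w = Im (v̄ w)`, any three vectors `v₁, v₂, v₃` of the plane satisfy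
`cross v₂ v₃ • v₁ + cross v₃ v₁ • v₂ + cross v₁ v₂ • v₃ = 0`. If the three coefficients are
positive, adding a large multiple of this relation to any real combination of `v₂, v₃` makes all
coefficients nonnegative, so the cone spanned by `v₁, v₂, v₃` is the whole plane. For
`v₁, v₂, v₃ = q_μ(0), q_μ(1), q_μ(Re μ)` the three cross products factor explicitly, and the
defining inequality of `Γ₁` is exactly the positivity of `cross (q_μ 0) (q_μ 1)`.
-/

namespace Complex

def cross (v w : ℂ) : ℝ := v.re * w.im - v.im * w.re

theorem cross_mul_eq (v w z : ℂ) :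
    (cross v w : ℂ) * z = cross z w * v + cross v z * w := by
  apply Complex.ext <;>
  · simp only [cross, add_re, add_im, mul_re, mul_im, ofReal_re, ofReal_im]
    ring

theorem cross_mul_add_cross_mul_add_cross_mul (v₁ v₂ v₃ : ℂ) :
    (cross v₂ v₃ : ℂ) * v₁ + cross v₃ v₁ * v₂ + cross v₁ v₂ * v₃ = 0 := by
  rw [Complex.ext_iff]
  simp only [cross, add_re, add_im, mul_re, mul_im, ofReal_re, ofReal_im, zero_re, zero_im]
  constructor <;> ring

theorem exists_nonneg_combination_of_cross_pos {v₁ v₂ v₃ : ℂ} (h₁₂ : 0 < cross v₁ v₂)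
    (h₂₃ : 0 < cross v₂ v₃) (h₃₁ : 0 < cross v₃ v₁) (z : ℂ) :
    ∃ α₁ α₂ α₃ : ℝ, 0 ≤ α₁ ∧ 0 ≤ α₂ ∧ 0 ≤ α₃ ∧
      z = (α₁ : ℂ) * v₁ + (α₂ : ℂ) * v₂ + (α₃ : ℂ) * v₃ := by
  set β₂ := cross z v₃
  set β₃ := cross v₂ z
  set t := |β₂| / cross v₃ v₁ + |β₃| / cross v₁ v₂
  have hβ₂ : |β₂| ≤ t * cross v₃ v₁ := by
    have : 0 ≤ |β₃| / cross v₁ v₂ := by positivity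
    rw [add_mul, div_mul_cancel₀ _ h₃₁.ne']
    nlinarith
  have hβ₃ : |β₃| ≤ t * cross v₁ v₂ := by
    have : 0 ≤ |β₂| / cross v₃ v₁ := by positivity
    rw [add_mul, div_mul_cancel₀ _ h₁₂.ne']
    nlinarith
  refine ⟨t, (β₂ + t * cross v₃ v₁) / cross v₂ v₃, (β₃ + t * cross v₁ v₂) / cross v₂ v₃,
    by positivity, div_nonneg (by linarith [neg_abs_le β₂]) h₂₃.le,
    div_nonneg (by linarith [neg_abs_le β₃]) h₂₃.le, ?_⟩
  have hc : (cross v₂ v₃ : ℂ) ≠ 0 := by exact_mod_cast h₂₃.ne'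
  push_cast
  field_simp
  linear_combination
    cross_mul_eq v₂ v₃ z - (t : ℂ) * cross_mul_add_cross_mul_add_cross_mul v₁ v₂ v₃

end Complex

open Complex

section qmu

variable (μ : ℂ)

theorem qmu_re (x : ℝ) :
    (qmu μ x).re = ((μ.re - x) ^ 2 + μ.im ^ 2) ^ 2
      - (2 * μ.re - 1 - x) * ((μ.re - x) ^ 2 - μ.im ^ 2) - 4 * μ.im ^ 2 * (μ.re - x) := by
  have hnorm : ‖μ - (x : ℂ)‖ ^ 2 = (μ.re - x) ^ 2 + μ.im ^ 2 := by
    rw [Complex.sq_norm, Complex.normSq_apply]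
    simp only [sub_re, sub_im, ofReal_re, ofReal_im, sub_zero]
    ring
  rw [qmu, sub_re, ofReal_re, show ‖μ - (x : ℂ)‖ ^ 4 = (‖μ - (x : ℂ)‖ ^ 2) ^ 2 by ring, hnorm]
  simp only [pow_two, mul_re, mul_im, sub_re, sub_im, conj_re, conj_im, ofReal_re, ofReal_im,
    re_ofNat, im_ofNat, one_re, one_im]
  ring

theorem qmu_im (x : ℝ) :
    (qmu μ x).im = 2 * μ.im * ((μ.re - 1) * (μ.re - x) + μ.im ^ 2) := by
  rw [qmu, sub_im, ofReal_im]
  simp only [pow_two, mul_re, mul_im, sub_re, sub_im, conj_re, conj_im, ofReal_re, ofReal_im,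
    re_ofNat, im_ofNat, one_re, one_im]
  ring

theorem cross_qmu_zero_one :
    cross (qmu μ 0) (qmu μ 1) = 2 * μ.im * ((1 - μ.re) ^ 2 + μ.im ^ 2)
      * (3 * μ.re * (1 - μ.re) ^ 2 - μ.im ^ 2 * (4 - 3 * μ.re)) := by
  simp only [cross, qmu_re, qmu_im]
  ring

theorem cross_qmu_one_re :
    cross (qmu μ 1) (qmu μ μ.re)
      = 2 * μ.im ^ 3 * (1 - μ.re) * (4 - μ.re) * ((1 - μ.re) ^ 2 + μ.im ^ 2) := by
  simp only [cross, qmu_re, qmu_im]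
  ring

theorem cross_qmu_re_zero :
    cross (qmu μ μ.re) (qmu μ 0)
      = 2 * μ.re * μ.im ^ 3 * (μ.im ^ 2 * (2 - μ.re) + (1 - μ.re) ^ 3) := by
  simp only [cross, qmu_re, qmu_im]
  ring

end qmu

/-- Lemma (for `μ ∈ Γ₁`, three values of `q_μ` positively span `ℂ`). -/
theorem qmu_spans (μ : ℂ) (ha : 0 < μ.re) (ha1 : μ.re < 1) (hb : 0 < μ.im)
    (hb1 : μ.im < Real.sqrt (3 * μ.re * (1 - μ.re) ^ 2 / (4 - 3 * μ.re))) :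
    ∃ x₁ x₂ x₃ : ℝ, 0 ≤ x₁ ∧ x₁ < x₂ ∧ x₂ < x₃ ∧ x₃ ≤ 1 ∧
      {z : ℂ | ∃ α₁ α₂ α₃ : ℝ, 0 ≤ α₁ ∧ 0 ≤ α₂ ∧ 0 ≤ α₃ ∧
        z = (α₁ : ℂ) * qmu μ x₁ + (α₂ : ℂ) * qmu μ x₂ + (α₃ : ℂ) * qmu μ x₃}
      = Set.univ := by
  have h1a : 0 < 1 - μ.re := by linarith
  have hΓ₁ : μ.im ^ 2 * (4 - 3 * μ.re) < 3 * μ.re * (1 - μ.re) ^ 2 :=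
    (lt_div_iff₀ (by linarith)).mp ((Real.lt_sqrt hb.le).mp hb1)
  have h₀₁ : 0 < cross (qmu μ 0) (qmu μ 1) := by
    rw [cross_qmu_zero_one]
    have : 0 < 3 * μ.re * (1 - μ.re) ^ 2 - μ.im ^ 2 * (4 - 3 * μ.re) := by linarith
    positivity
  have h₁ₐ : 0 < cross (qmu μ 1) (qmu μ μ.re) := by
    rw [cross_qmu_one_re]
    have : 0 < 4 - μ.re := by linarith
    positivity
  have hₐ₀ : 0 < cross (qmu μ μ.re) (qmu μ 0) := by
    rw [cross_qmu_re_zero]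
    have : 0 < 2 - μ.re := by linarith
    positivity
  refine ⟨0, μ.re, 1, le_rfl, ha, ha1, le_rfl, Set.eq_univ_of_forall fun z => ?_⟩
  obtain ⟨α₁, α₃, α₂, h₁, h₃, h₂, hz⟩ := exists_nonneg_combination_of_cross_pos h₀₁ h₁ₐ hₐ₀ z
  exact ⟨α₁, α₂, α₃, h₁, h₂, h₃, by rw [hz]; ring⟩
end
end

section
/- Let μ ∈ ℂ with Im μ ≠ 0 and let φ ∈ C⁰([0,1], ℂ). Assume there exist 0 ≤ x₁ < x₂ < x₃ ≤ 1 such that { α₁ φ(x₁) + α₂ φ(x₂) + α₃ φ(x₃) : (α₁, α₂, α₃) ∈ [0,∞)³ } = ℂ. Then there exists a smooth strictly increasing function U_s : [0,∞) → [0,1) with U_s(0) = 0, converging exponentially to 1 at infinity (i.e., 1 − U_s(y) = C e^{−y} for y large, for some constant C > 0), such that ∫₀^∞ (1 − U_s(y)) / |μ − U_s(y)|⁴ · φ(U_s(y)) dy = 0. -/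
open MeasureTheory Filter Set

noncomputable section

/-!
Write `U = 1 - e^{-S}` for a reparametrisation `S` of the half-line and put
`g(t) = h(1 - e^{-t})` with `h(u) = (1 - u) φ(u) / |μ - u|⁴`. If `T = S⁻¹`, the substitution
`y = T t` turns the integral into `∫₀^∞ T'(t) g(t) dt`. Take `T(t) = t + Σ αᵢ Hᵢ(t)` with
`αᵢ ≥ 0` and `Hᵢ` smooth steps rising from 0 to 1 just after `tᵢ`: then
`∫ T' g = ∫ g + Σ αᵢ ∫ Hᵢ' g`, and `∫ Hᵢ' g → g(tᵢ)` as the steps sharpen.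

Positive spanning of `ℂ` by three vectors is an open condition (the pairwise determinants
`det(z₁,z₂)`, `det(z₂,z₃)`, `det(z₃,z₁)` have a common strict sign). So the `xᵢ` can be moved
into `(0,1)`, where `tᵢ = -log(1 - xᵢ)` is finite and `h(xᵢ)` is a positive multiple of `φ(xᵢ)`,
and for sharp enough steps the three numbers `∫ Hᵢ' g` still span `ℂ` positively; choose the
`αᵢ` with `Σ αᵢ ∫ Hᵢ' g = -∫ g`. Since `S(y) = y - Σ αᵢ` for large `y`, the tail of `1 - U` is
exactly exponential.
-/

open Topology

def PosSpans (z₁ z₂ z₃ : ℂ) : Prop :=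
  ∀ w : ℂ, ∃ a b c : ℝ, 0 ≤ a ∧ 0 ≤ b ∧ 0 ≤ c ∧ w = a * z₁ + b * z₂ + c * z₃

def det2 (a b : ℂ) : ℝ := a.re * b.im - a.im * b.re

theorem det2_mul_add_eq_zero (a b c : ℂ) :
    (det2 b c : ℂ) * a + (det2 c a : ℂ) * b + (det2 a b : ℂ) * c = 0 := by
  apply Complex.ext <;> simp [det2] <;> ring

theorem posSpans_of_relation {z₁ z₂ z₃ : ℂ} (hd : det2 z₁ z₂ ≠ 0) {γ₁ γ₂ γ₃ : ℝ}
    (hγ₁ : 0 < γ₁) (hγ₂ : 0 < γ₂) (hγ₃ : 0 < γ₃)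
    (hrel : (γ₁ : ℂ) * z₁ + γ₂ * z₂ + γ₃ * z₃ = 0) : PosSpans z₁ z₂ z₃ := by
  intro w
  set a := -det2 z₂ w / det2 z₁ z₂
  set b := -det2 w z₁ / det2 z₁ z₂
  have hw : w = a * z₁ + b * z₂ := by
    have hd' : (det2 z₁ z₂ : ℂ) ≠ 0 := by exact_mod_cast hd
    simp only [a, b]
    push_cast
    field_simp
    linear_combination det2_mul_add_eq_zero z₁ z₂ w
  set t := max (|a| / γ₁) (|b| / γ₂)
  have ha : 0 ≤ a + t * γ₁ := by
    have : |a| ≤ t * γ₁ := (div_le_iff₀ hγ₁).1 (le_max_left _ _)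
    linarith [neg_abs_le a]
  have hb : 0 ≤ b + t * γ₂ := by
    have : |b| ≤ t * γ₂ := (div_le_iff₀ hγ₂).1 (le_max_right _ _)
    linarith [neg_abs_le b]
  have ht : 0 ≤ t := le_max_of_le_left (by positivity)
  refine ⟨a + t * γ₁, b + t * γ₂, t * γ₃, ha, hb, by positivity, ?_⟩
  push_cast
  linear_combination hw - t * hrel

theorem PosSpans.exists_pos_relation {z₁ z₂ z₃ : ℂ} (h : PosSpans z₁ z₂ z₃) :
    ∃ γ₁ γ₂ γ₃ : ℝ, 0 < γ₁ ∧ 0 < γ₂ ∧ 0 < γ₃ ∧ (γ₁ : ℂ) * z₁ + γ₂ * z₂ + γ₃ * z₃ = 0 := by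
  obtain ⟨β₁, β₂, β₃, hβ₁, hβ₂, hβ₃, hβ⟩ := h (-(z₁ + z₂ + z₃))
  refine ⟨β₁ + 1, β₂ + 1, β₃ + 1, by positivity, by positivity, by positivity, ?_⟩
  push_cast
  linear_combination -hβ

theorem det2_eq_of_relation {z₁ z₂ z₃ : ℂ} {γ₁ γ₂ γ₃ : ℝ}
    (hrel : (γ₁ : ℂ) * z₁ + γ₂ * z₂ + γ₃ * z₃ = 0) :
    γ₃ * det2 z₂ z₃ = γ₁ * det2 z₁ z₂ ∧ γ₃ * det2 z₃ z₁ = γ₂ * det2 z₁ z₂ := by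
  have hre := congrArg Complex.re hrel
  have him := congrArg Complex.im hrel
  simp only [Complex.add_re, Complex.add_im, Complex.re_ofReal_mul, Complex.im_ofReal_mul,
    Complex.zero_re, Complex.zero_im] at hre him
  constructor <;> simp only [det2]
  · linear_combination z₂.re * him - z₂.im * hre
  · linear_combination z₁.im * hre - z₁.re * him

theorem PosSpans.det2_ne_zero {z₁ z₂ z₃ : ℂ} (h : PosSpans z₁ z₂ z₃) : det2 z₁ z₂ ≠ 0 := by
  obtain ⟨γ₁, γ₂, γ₃, -, -, hγ₃, hrel⟩ := h.exists_pos_relation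
  obtain ⟨h₂₃, h₃₁⟩ := det2_eq_of_relation hrel
  intro h₁₂
  have h₂₃ : det2 z₂ z₃ = 0 := by simpa [h₁₂, hγ₃.ne'] using h₂₃
  have h₃₁ : det2 z₃ z₁ = 0 := by simpa [h₁₂, hγ₃.ne'] using h₃₁
  obtain ⟨a₁, a₂, a₃, -, -, -, ha⟩ := h 1
  obtain ⟨b₁, b₂, b₃, -, -, -, hb⟩ := h Complex.I
  have key : det2 1 Complex.I = (a₁ * b₂ - a₂ * b₁) * det2 z₁ z₂
      + (a₂ * b₃ - a₃ * b₂) * det2 z₂ z₃ + (a₃ * b₁ - a₁ * b₃) * det2 z₃ z₁ := by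
    rw [ha, hb]
    simp only [det2, Complex.add_re, Complex.add_im, Complex.re_ofReal_mul,
      Complex.im_ofReal_mul]
    ring
  rw [h₁₂, h₂₃, h₃₁] at key
  norm_num [det2] at key

theorem posSpans_iff {z₁ z₂ z₃ : ℂ} :
    PosSpans z₁ z₂ z₃ ↔ 0 < det2 z₁ z₂ * det2 z₂ z₃ ∧ 0 < det2 z₁ z₂ * det2 z₃ z₁ := by
  constructor
  · intro h
    obtain ⟨γ₁, γ₂, γ₃, hγ₁, hγ₂, hγ₃, hrel⟩ := h.exists_pos_relation
    obtain ⟨h₂₃, h₃₁⟩ := det2_eq_of_relation hrel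
    have hD := h.det2_ne_zero
    constructor <;> refine pos_of_mul_pos_right (a := γ₃) ?_ hγ₃.le
    · rw [mul_left_comm, h₂₃, mul_left_comm]
      exact mul_pos hγ₁ (mul_self_pos.2 hD)
    · rw [mul_left_comm, h₃₁, mul_left_comm]
      exact mul_pos hγ₂ (mul_self_pos.2 hD)
  · rintro ⟨h₁, h₂⟩
    have hD : det2 z₁ z₂ ≠ 0 := by
      rintro h0
      simp [h0] at h₁
    refine posSpans_of_relation hD h₁ h₂ (mul_self_pos.2 hD) ?_
    push_cast
    linear_combination (det2 z₁ z₂ : ℂ) * det2_mul_add_eq_zero z₁ z₂ z₃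

theorem isOpen_posSpans : IsOpen {p : ℂ × ℂ × ℂ | PosSpans p.1 p.2.1 p.2.2} := by
  simp only [posSpans_iff, ofPred_and]
  exact (isOpen_lt continuous_const (by unfold det2; fun_prop)).inter
    (isOpen_lt continuous_const (by unfold det2; fun_prop))

theorem PosSpans.ofReal_mul {z₁ z₂ z₃ : ℂ} (h : PosSpans z₁ z₂ z₃) {c₁ c₂ c₃ : ℝ}
    (hc₁ : 0 < c₁) (hc₂ : 0 < c₂) (hc₃ : 0 < c₃) :
    PosSpans (c₁ * z₁) (c₂ * z₂) (c₃ * z₃) := by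
  intro w
  obtain ⟨a, b, c, ha, hb, hc, rfl⟩ := h w
  refine ⟨a / c₁, b / c₂, c / c₃, by positivity, by positivity, by positivity, ?_⟩
  have : (c₁ : ℂ) ≠ 0 := by exact_mod_cast hc₁.ne'
  have : (c₂ : ℂ) ≠ 0 := by exact_mod_cast hc₂.ne'
  have : (c₃ : ℂ) ≠ 0 := by exact_mod_cast hc₃.ne'
  push_cast
  field_simp

theorem PosSpans.exists_mem_of_mem_closure {X : Type*} [TopologicalSpace X] {φ : X → ℂ} {s : Set X}
    {x₁ x₂ x₃ : X} (h : PosSpans (φ x₁) (φ x₂) (φ x₃))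
    (hx₁ : x₁ ∈ closure s) (hx₂ : x₂ ∈ closure s) (hx₃ : x₃ ∈ closure s)
    (hφ₁ : ContinuousWithinAt φ s x₁) (hφ₂ : ContinuousWithinAt φ s x₂)
    (hφ₃ : ContinuousWithinAt φ s x₃) :
    ∃ y₁ ∈ s, ∃ y₂ ∈ s, ∃ y₃ ∈ s, PosSpans (φ y₁) (φ y₂) (φ y₃) := by
  have := mem_closure_iff_nhdsWithin_neBot.1 hx₁
  have := mem_closure_iff_nhdsWithin_neBot.1 hx₂
  have := mem_closure_iff_nhdsWithin_neBot.1 hx₃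
  have hlim : Tendsto (Prod.map φ (Prod.map φ φ)) (𝓝[s] x₁ ×ˢ (𝓝[s] x₂ ×ˢ 𝓝[s] x₃))
      (𝓝 (φ x₁, φ x₂, φ x₃)) := by
    rw [nhds_prod_eq, nhds_prod_eq]
    exact hφ₁.tendsto.prodMap (hφ₂.tendsto.prodMap hφ₃.tendsto)
  obtain ⟨⟨y₁, y₂, y₃⟩, hspan, hy₁, hy₂, hy₃⟩ :=
    ((hlim.eventually (isOpen_posSpans.mem_nhds h)).and
      (prod_mem_prod self_mem_nhdsWithin (prod_mem_prod self_mem_nhdsWithin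
        self_mem_nhdsWithin))).exists
  exact ⟨y₁, hy₁, y₂, hy₂, y₃, hy₃, hspan⟩

theorem PosSpans.exists_mem_Ioo {φ : ℝ → ℂ} {a b : ℝ} (hab : a < b)
    (hφ : ContinuousOn φ (Icc a b)) {x₁ x₂ x₃ : ℝ} (h : PosSpans (φ x₁) (φ x₂) (φ x₃))
    (hx₁ : x₁ ∈ Icc a b) (hx₂ : x₂ ∈ Icc a b) (hx₃ : x₃ ∈ Icc a b) :
    ∃ y₁ ∈ Ioo a b, ∃ y₂ ∈ Ioo a b, ∃ y₃ ∈ Ioo a b, PosSpans (φ y₁) (φ y₂) (φ y₃) := by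
  have hcl : closure (Ioo a b) = Icc a b := closure_Ioo hab.ne
  exact h.exists_mem_of_mem_closure (hcl ▸ hx₁) (hcl ▸ hx₂) (hcl ▸ hx₃)
    ((hφ _ hx₁).mono Ioo_subset_Icc_self) ((hφ _ hx₂).mono Ioo_subset_Icc_self)
    ((hφ _ hx₃).mono Ioo_subset_Icc_self)

def smoothStep (t₀ δ t : ℝ) : ℝ := Real.smoothTransition ((t - t₀) / δ)

section SmoothStep

variable {t₀ δ : ℝ}

theorem contDiff_smoothStep {n : ℕ∞} : ContDiff ℝ n (smoothStep t₀ δ) :=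
  Real.smoothTransition.contDiff.comp ((contDiff_id.sub contDiff_const).div_const δ)

theorem differentiable_smoothStep : Differentiable ℝ (smoothStep t₀ δ) :=
  (contDiff_smoothStep (n := 1)).differentiable one_ne_zero

theorem continuous_deriv_smoothStep : Continuous (deriv (smoothStep t₀ δ)) :=
  (contDiff_smoothStep (n := 1)).continuous_deriv le_rfl

theorem monotone_smoothStep (hδ : 0 < δ) : Monotone (smoothStep t₀ δ) := fun _ _ h =>
  Real.smoothTransition.monotone (div_le_div_of_nonneg_right (by linarith) hδ.le)

theorem smoothStep_of_le (hδ : 0 < δ) {t : ℝ} (ht : t ≤ t₀) : smoothStep t₀ δ t = 0 :=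
  Real.smoothTransition.zero_of_nonpos (div_nonpos_of_nonpos_of_nonneg (by linarith) hδ.le)

theorem smoothStep_of_ge (hδ : 0 < δ) {t : ℝ} (ht : t₀ + δ ≤ t) : smoothStep t₀ δ t = 1 :=
  Real.smoothTransition.one_of_one_le ((le_div_iff₀ hδ).2 (by linarith))

theorem deriv_smoothStep_of_notMem (hδ : 0 < δ) {t : ℝ} (ht : t ∉ Icc t₀ (t₀ + δ)) :
    deriv (smoothStep t₀ δ) t = 0 := by
  rcases not_and_or.1 ht with ht | ht
  · have : smoothStep t₀ δ =ᶠ[𝓝 t] fun _ => 0 := by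
      filter_upwards [Iio_mem_nhds (not_le.1 ht)] with s hs using smoothStep_of_le hδ hs.le
    rw [this.deriv_eq, deriv_const]
  · have : smoothStep t₀ δ =ᶠ[𝓝 t] fun _ => 1 := by
      filter_upwards [Ioi_mem_nhds (not_le.1 ht)] with s hs using smoothStep_of_ge hδ hs.le
    rw [this.deriv_eq, deriv_const]

theorem setIntegral_deriv_smoothStep (hδ : 0 < δ) :
    ∫ t in Icc t₀ (t₀ + δ), deriv (smoothStep t₀ δ) t = 1 := by
  rw [integral_Icc_eq_integral_Ioc, ← intervalIntegral.integral_of_le (by linarith),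
    intervalIntegral.integral_deriv_eq_sub
      (fun t _ => differentiable_smoothStep t)
      (continuous_deriv_smoothStep.intervalIntegrable _ _),
    smoothStep_of_ge hδ le_rfl, smoothStep_of_le hδ le_rfl, sub_zero]

variable {E : Type*} [NormedAddCommGroup E] [NormedSpace ℝ E] {g : ℝ → E}

theorem setIntegral_Ioi_deriv_smoothStep_smul (ht₀ : 0 < t₀) (hδ : 0 < δ) :
    ∫ t in Ioi 0, deriv (smoothStep t₀ δ) t • g t
      = ∫ t in Icc t₀ (t₀ + δ), deriv (smoothStep t₀ δ) t • g t :=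
  setIntegral_eq_of_subset_of_forall_sdiff_eq_zero measurableSet_Ioi
    (fun _ ht => lt_of_lt_of_le ht₀ ht.1)
    (fun _ ht => by rw [deriv_smoothStep_of_notMem hδ ht.2, zero_smul])

theorem integrableOn_deriv_smoothStep_smul (ht₀ : 0 < t₀) (hδ : 0 < δ)
    (hg : ContinuousOn g (Ioi 0)) :
    IntegrableOn (fun t => deriv (smoothStep t₀ δ) t • g t) (Ioi 0) := by
  have hIcc : IntegrableOn (fun t => deriv (smoothStep t₀ δ) t • g t) (Icc t₀ (t₀ + δ)) :=
    (continuous_deriv_smoothStep.continuousOn.smul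
      (hg.mono fun _ ht => lt_of_lt_of_le ht₀ ht.1)).integrableOn_compact isCompact_Icc
  exact hIcc.of_forall_sdiff_eq_zero measurableSet_Ioi
    fun _ ht => by rw [deriv_smoothStep_of_notMem hδ ht.2, zero_smul]

theorem tendsto_setIntegral_deriv_smoothStep_smul [CompleteSpace E] (ht₀ : 0 < t₀)
    (hg : ContinuousOn g (Ioi 0)) :
    Tendsto (fun δ => ∫ t in Ioi 0, deriv (smoothStep t₀ δ) t • g t) (𝓝[>] 0) (𝓝 (g t₀)) := by
  rw [Metric.tendsto_nhdsWithin_nhds]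
  intro ε hε
  obtain ⟨η, hη, hgη⟩ := Metric.continuousAt_iff.1 (hg.continuousAt (Ioi_mem_nhds ht₀))
    (ε / 2) (half_pos hε)
  refine ⟨η, hη, fun δ (hδ : 0 < δ) hδη => ?_⟩
  rw [Real.dist_eq, sub_zero, abs_of_pos hδ] at hδη
  set b := deriv (smoothStep t₀ δ)
  have hb : IntegrableOn b (Icc t₀ (t₀ + δ)) :=
    continuous_deriv_smoothStep.integrableOn_Icc
  have hbg : IntegrableOn (fun t => b t • g t) (Icc t₀ (t₀ + δ)) :=
    (integrableOn_deriv_smoothStep_smul ht₀ hδ hg).mono_set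
      fun _ ht => lt_of_lt_of_le ht₀ ht.1
  have hsub : (∫ t in Ioi 0, b t • g t) - g t₀
      = ∫ t in Icc t₀ (t₀ + δ), b t • (g t - g t₀) := by
    simp_rw [smul_sub]
    rw [setIntegral_Ioi_deriv_smoothStep_smul ht₀ hδ, integral_sub hbg (hb.smul_const _),
      integral_smul_const, setIntegral_deriv_smoothStep hδ, one_smul]
  have hbound : ∀ t ∈ Icc t₀ (t₀ + δ), ‖b t • (g t - g t₀)‖ ≤ b t * (ε / 2) := by
    intro t ht
    have hdist : dist t t₀ < η := by
      rw [Real.dist_eq, abs_of_nonneg (by linarith [ht.1])]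
      linarith [ht.2]
    rw [norm_smul, Real.norm_of_nonneg ((monotone_smoothStep hδ).deriv_nonneg)]
    exact mul_le_mul_of_nonneg_left (by simpa [dist_eq_norm] using (hgη hdist).le)
      (monotone_smoothStep hδ).deriv_nonneg
  rw [dist_eq_norm, hsub]
  calc ‖∫ t in Icc t₀ (t₀ + δ), b t • (g t - g t₀)‖
      ≤ ∫ t in Icc t₀ (t₀ + δ), b t * (ε / 2) :=
        norm_integral_le_of_norm_le (hb.mul_const _)
          (ae_restrict_of_forall_mem measurableSet_Icc hbound)
    _ = ε / 2 := by rw [integral_mul_const, setIntegral_deriv_smoothStep hδ, one_mul]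
    _ < ε := half_lt_self hε

end SmoothStep

theorem exists_reparam_setIntegral_comp_eq_add {E : Type*} [NormedAddCommGroup E]
    [NormedSpace ℝ E] {n : WithTop ℕ∞} (hn : 1 ≤ n) {g : ℝ → E} {P : ℝ → ℝ} {c : ℝ}
    (hP : ContDiff ℝ n P) (hPm : Monotone P) (hP0 : P 0 = 0) (hPc : ∀ᶠ t in atTop, P t = c)
    (hg : IntegrableOn g (Ioi 0)) (hPg : IntegrableOn (fun t => deriv P t • g t) (Ioi 0)) :
    ∃ S : ℝ → ℝ, ContDiff ℝ n S ∧ StrictMono S ∧ S 0 = 0 ∧ (∀ᶠ y in atTop, S y = y - c) ∧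
      ∫ y in Ioi 0, g (S y) = (∫ t in Ioi 0, g t) + ∫ t in Ioi 0, deriv P t • g t := by
  set T : ℝ → ℝ := fun t => t + P t
  have hT' : ∀ t, 0 < 1 + deriv P t := fun t => add_pos_of_pos_of_nonneg one_pos hPm.deriv_nonneg
  have hTd : ∀ t, HasDerivAt T (1 + deriv P t) t := fun t =>
    (hasDerivAt_id t).add (hP.differentiable (zero_lt_one.trans_le hn).ne' t).hasDerivAt
  have hTm : StrictMono T := strictMono_id.add_monotone hPm
  have hTsurj : Function.Surjective T := by
    refine Continuous.surjective (continuous_id.add hP.continuous) ?_ ?_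
    · exact (tendsto_atTop_add_const_right _ c tendsto_id).congr'
        (hPc.mono fun t ht => by simp [T, ht])
    · refine tendsto_atBot_mono' _ ?_ tendsto_id
      filter_upwards [eventually_le_atBot 0] with t ht
      simpa [T, hP0] using hPm ht
  set e := hTm.orderIsoOfSurjective T hTsurj
  have he0 : e 0 = 0 := by simp [e, T, hP0]
  refine ⟨e.symm, ?_, e.symm.strictMono, ?_, ?_, ?_⟩
  · exact e.toHomeomorph.contDiff_symm_deriv (fun t => (hT' t).ne') hTd (contDiff_id.add hP)
  · rw [e.symm_apply_eq, he0]
  · filter_upwards [(tendsto_atTop_add_const_right _ (-c) tendsto_id).eventually hPc] with y hy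
    rw [e.symm_apply_eq]
    simp only [e, StrictMono.coe_orderIsoOfSurjective, T, id, ← sub_eq_add_neg] at hy ⊢
    rw [hy, sub_add_cancel]
  · have himage := integral_image_eq_integral_abs_deriv_smul (measurableSet_Ioi (a := 0))
      (fun t _ => (hTd t).hasDerivWithinAt) hTm.injective.injOn (fun y => g (e.symm y))
    rw [show T '' Ioi 0 = e '' Ioi 0 from rfl, e.image_Ioi, he0] at himage
    rw [himage, ← integral_add hg hPg]
    refine setIntegral_congr_fun measurableSet_Ioi fun t _ => ?_
    rw [abs_of_pos (hT' t), show e.symm (T t) = t from e.symm_apply_apply t, add_smul, one_smul]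

theorem exists_smoothStep_posSpans {g : ℝ → ℂ} (hg : ContinuousOn g (Ioi 0)) {t₁ t₂ t₃ : ℝ}
    (ht₁ : 0 < t₁) (ht₂ : 0 < t₂) (ht₃ : 0 < t₃) (hspan : PosSpans (g t₁) (g t₂) (g t₃)) :
    ∃ δ > 0, PosSpans (∫ t in Ioi 0, deriv (smoothStep t₁ δ) t • g t)
      (∫ t in Ioi 0, deriv (smoothStep t₂ δ) t • g t)
      (∫ t in Ioi 0, deriv (smoothStep t₃ δ) t • g t) := by
  have hlim := (tendsto_setIntegral_deriv_smoothStep_smul ht₁ hg).prodMk_nhds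
    ((tendsto_setIntegral_deriv_smoothStep_smul ht₂ hg).prodMk_nhds
      (tendsto_setIntegral_deriv_smoothStep_smul ht₃ hg))
  exact (eventually_mem_nhdsWithin.and (hlim.eventually (isOpen_posSpans.mem_nhds hspan))).exists

theorem exists_reparam_setIntegral_eq_zero {g : ℝ → ℂ} (hg : ContinuousOn g (Ioi 0))
    (hgi : IntegrableOn g (Ioi 0)) {t₁ t₂ t₃ : ℝ} (ht₁ : 0 < t₁) (ht₂ : 0 < t₂) (ht₃ : 0 < t₃)
    (hspan : PosSpans (g t₁) (g t₂) (g t₃)) :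
    ∃ S : ℝ → ℝ, ContDiff ℝ (⊤ : ℕ∞) S ∧ StrictMono S ∧ S 0 = 0 ∧
      (∃ c, ∀ᶠ y in atTop, S y = y - c) ∧ ∫ y in Ioi 0, g (S y) = 0 := by
  obtain ⟨δ, hδ, hspanδ⟩ := exists_smoothStep_posSpans hg ht₁ ht₂ ht₃ hspan
  obtain ⟨α₁, α₂, α₃, hα₁, hα₂, hα₃, hα⟩ := hspanδ (-∫ t in Ioi 0, g t)
  set H : ℝ → ℝ → ℝ := fun t₀ => smoothStep t₀ δ
  set P : ℝ → ℝ := fun t => α₁ * H t₁ t + α₂ * H t₂ t + α₃ * H t₃ t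
  have hPg : (fun t => deriv P t • g t) = fun t => α₁ • (deriv (H t₁) t • g t)
      + α₂ • (deriv (H t₂) t • g t) + α₃ • (deriv (H t₃) t • g t) := by
    funext t
    have hH : ∀ t₀, HasDerivAt (H t₀) (deriv (H t₀) t) t := fun t₀ =>
      (differentiable_smoothStep t).hasDerivAt
    have hPd : HasDerivAt P
        (α₁ * deriv (H t₁) t + α₂ * deriv (H t₂) t + α₃ * deriv (H t₃) t) t :=
      (((hH t₁).const_mul α₁).add ((hH t₂).const_mul α₂)).add ((hH t₃).const_mul α₃)
    rw [hPd.deriv]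
    simp only [add_smul, mul_smul]
  have hwi : ∀ t₀, 0 < t₀ → ∀ α : ℝ,
      IntegrableOn (fun t => α • (deriv (H t₀) t • g t)) (Ioi 0) :=
    fun t₀ ht₀ α => (integrableOn_deriv_smoothStep_smul ht₀ hδ hg).smul α
  have hi₁ := hwi t₁ ht₁ α₁
  have hi₂ := hwi t₂ ht₂ α₂
  have hi₃ := hwi t₃ ht₃ α₃
  obtain ⟨S, hS, hSm, hS0, hSc, hSint⟩ := exists_reparam_setIntegral_comp_eq_add
    (n := (⊤ : ℕ∞)) (by simp) (c := α₁ + α₂ + α₃) (P := P)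
    (((contDiff_const.mul contDiff_smoothStep).add (contDiff_const.mul contDiff_smoothStep)).add
      (contDiff_const.mul contDiff_smoothStep))
    ((((monotone_smoothStep hδ).const_mul hα₁).add ((monotone_smoothStep hδ).const_mul hα₂)).add
      ((monotone_smoothStep hδ).const_mul hα₃))
    (by simp [P, H, smoothStep_of_le hδ, ht₁.le, ht₂.le, ht₃.le])
    (by
      filter_upwards [eventually_ge_atTop (t₁ + δ), eventually_ge_atTop (t₂ + δ),
        eventually_ge_atTop (t₃ + δ)] with t h₁ h₂ h₃
      simp [P, H, smoothStep_of_ge hδ, h₁, h₂, h₃])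
    hgi (by rw [hPg]; exact (Integrable.fun_add hi₁ hi₂).fun_add hi₃)
  refine ⟨S, hS, hSm, hS0, ⟨_, hSc⟩, ?_⟩
  rw [hSint, hPg, integral_add (Integrable.fun_add hi₁ hi₂) hi₃, integral_add hi₁ hi₂,
    integral_smul, integral_smul, integral_smul]
  simp only [Complex.real_smul]
  linear_combination -hα

theorem one_sub_exp_neg_mem_Ico {t : ℝ} (ht : 0 ≤ t) : 1 - Real.exp (-t) ∈ Ico 0 1 :=
  ⟨sub_nonneg.2 (Real.exp_le_one_iff.2 (neg_nonpos.2 ht)), sub_lt_self _ (Real.exp_pos _)⟩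

theorem one_sub_exp_neg_log_one_sub {y : ℝ} (hy : y < 1) :
    1 - Real.exp (-(-Real.log (1 - y))) = y := by
  rw [neg_neg, Real.exp_log (sub_pos.2 hy), sub_sub_cancel]

theorem integrableOn_Ioi_comp_one_sub_exp_neg {E : Type*} [NormedAddCommGroup E]
    [NormedSpace ℝ E] {h k : ℝ → E} (hk : ContinuousOn k (Icc 0 1))
    (hhk : ∀ u, h u = (1 - u) • k u) :
    IntegrableOn (fun t => h (1 - Real.exp (-t))) (Ioi 0) := by
  obtain ⟨M, hM⟩ := isCompact_Icc.exists_bound_of_continuousOn hk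
  have hmaps : MapsTo (fun t => 1 - Real.exp (-t)) (Ioi 0) (Icc 0 1) := fun t ht =>
    Ico_subset_Icc_self (one_sub_exp_neg_mem_Ico (le_of_lt ht))
  refine Integrable.mono' ((exp_neg_integrableOn_Ioi 0 one_pos).mul_const M) ?_ ?_
  · simp_rw [hhk]
    exact ((by fun_prop : Continuous fun t : ℝ => 1 - (1 - Real.exp (-t))).continuousOn.smul
      (hk.comp (by fun_prop) hmaps)).aestronglyMeasurable measurableSet_Ioi
  · refine ae_restrict_of_forall_mem measurableSet_Ioi fun t ht => ?_
    rw [hhk, sub_sub_cancel, norm_smul, Real.norm_of_nonneg (Real.exp_pos _).le, neg_one_mul]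
    exact mul_le_mul_of_nonneg_left (hM _ (hmaps ht)) (Real.exp_pos _).le

theorem exists_reparam_setIntegral_comp_one_sub_exp_neg_eq_zero {h k : ℝ → ℂ}
    (hk : ContinuousOn k (Icc 0 1)) (hhk : ∀ u, h u = (1 - u) • k u) {y₁ y₂ y₃ : ℝ}
    (hy₁ : y₁ ∈ Ioo 0 1) (hy₂ : y₂ ∈ Ioo 0 1) (hy₃ : y₃ ∈ Ioo 0 1)
    (hspan : PosSpans (h y₁) (h y₂) (h y₃)) :
    ∃ S : ℝ → ℝ, ContDiff ℝ (⊤ : ℕ∞) S ∧ StrictMono S ∧ S 0 = 0 ∧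
      (∃ c, ∀ᶠ y in atTop, S y = y - c) ∧ ∫ y in Ioi 0, h (1 - Real.exp (-S y)) = 0 := by
  have hh : ContinuousOn h (Icc 0 1) := by
    rw [show h = fun u => (1 - u) • k u from funext hhk]
    exact (continuous_const.sub continuous_id).continuousOn.smul hk
  have ht : ∀ y ∈ Ioo (0:ℝ) 1, 0 < -Real.log (1 - y) := fun y hy =>
    neg_pos.2 (Real.log_neg (sub_pos.2 hy.2) (sub_lt_self 1 hy.1))
  exact exists_reparam_setIntegral_eq_zero (g := fun t => h (1 - Real.exp (-t)))
    (hh.comp (by fun_prop) fun t ht => Ico_subset_Icc_self (one_sub_exp_neg_mem_Ico ht.le))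
    (integrableOn_Ioi_comp_one_sub_exp_neg hk hhk) (ht y₁ hy₁) (ht y₂ hy₂) (ht y₃ hy₃)
    (by simpa only [one_sub_exp_neg_log_one_sub hy₁.2, one_sub_exp_neg_log_one_sub hy₂.2,
      one_sub_exp_neg_log_one_sub hy₃.2] using hspan)

theorem one_sub_exp_neg_comp_profile {n : WithTop ℕ∞} {S : ℝ → ℝ} (hS : ContDiff ℝ n S)
    (hSm : StrictMono S) (hS0 : S 0 = 0) {c : ℝ} (hc : ∀ᶠ y in atTop, S y = y - c) :
    ContDiff ℝ n (fun y => 1 - Real.exp (-S y)) ∧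
      StrictMonoOn (fun y => 1 - Real.exp (-S y)) (Ici 0) ∧ 1 - Real.exp (-S 0) = 0 ∧
      (∀ y, 0 ≤ y → 1 - Real.exp (-S y) ∈ Ico (0:ℝ) 1) ∧
      (∃ C : ℝ, 0 < C ∧ ∃ y₀ : ℝ, ∀ y, y₀ ≤ y →
        1 - (1 - Real.exp (-S y)) = C * Real.exp (-y)) := by
  refine ⟨contDiff_const.sub (Real.contDiff_exp.comp hS.neg), fun a _ b _ hab => ?_,
    by simp [hS0], fun y hy => one_sub_exp_neg_mem_Ico (hS0 ▸ hSm.monotone hy), ?_⟩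
  · simpa using hSm hab
  · obtain ⟨y₀, hy₀⟩ := eventually_atTop.1 hc
    refine ⟨Real.exp c, Real.exp_pos c, y₀, fun y hy => ?_⟩
    rw [sub_sub_cancel, hy₀ y hy, ← Real.exp_add]
    ring_nf

/-- Lemma (construction of a shear flow concentrated on spanning directions). -/
theorem shear_flow_construction (μ : ℂ) (hμ : μ.im ≠ 0)
    (φ : ℝ → ℂ) (hφ : ContinuousOn φ (Icc (0:ℝ) 1))
    (x₁ x₂ x₃ : ℝ) (h1 : 0 ≤ x₁) (h12 : x₁ < x₂) (h23 : x₂ < x₃) (h3 : x₃ ≤ 1)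
    (hspan : {z : ℂ | ∃ α₁ α₂ α₃ : ℝ, 0 ≤ α₁ ∧ 0 ≤ α₂ ∧ 0 ≤ α₃ ∧
        z = (α₁ : ℂ) * φ x₁ + (α₂ : ℂ) * φ x₂ + (α₃ : ℂ) * φ x₃} = Set.univ) :
    ∃ U : ℝ → ℝ, ContDiff ℝ (⊤ : ℕ∞) U ∧ StrictMonoOn U (Ici 0) ∧ U 0 = 0 ∧
      (∀ y, 0 ≤ y → U y ∈ Ico (0:ℝ) 1) ∧
      (∃ C : ℝ, 0 < C ∧ ∃ y₀ : ℝ, ∀ y, y₀ ≤ y → 1 - U y = C * Real.exp (-y)) ∧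
      ∫ y in Ioi (0:ℝ),
        (((1 - U y) / ‖μ - (U y : ℂ)‖ ^ 4 : ℝ) : ℂ) * φ (U y) = 0 := by
  have hμu : ∀ u : ℝ, 0 < ‖μ - u‖ := fun u =>
    norm_pos_iff.2 fun h0 => hμ (by simpa using congrArg Complex.im (sub_eq_zero.1 h0))
  have hk : ContinuousOn (fun u : ℝ => (((‖μ - (u : ℂ)‖ ^ 4)⁻¹ : ℝ) : ℂ) * φ u) (Icc 0 1) :=
    (Complex.continuous_ofReal.comp ((by fun_prop : Continuous fun u : ℝ => ‖μ - u‖ ^ 4).inv₀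
      fun u => (pow_pos (hμu u) 4).ne')).continuousOn.mul hφ
  have hw : ∀ y ∈ Ioo (0:ℝ) 1, 0 < (1 - y) / ‖μ - y‖ ^ 4 := fun y hy =>
    div_pos (sub_pos.2 hy.2) (pow_pos (hμu y) 4)
  obtain ⟨y₁, hy₁, y₂, hy₂, y₃, hy₃, hspanφ⟩ := PosSpans.exists_mem_Ioo zero_lt_one hφ
    (fun w => eq_univ_iff_forall.1 hspan w) ⟨h1, by linarith⟩ ⟨by linarith, by linarith⟩
    ⟨by linarith, h3⟩
  obtain ⟨S, hS, hSm, hS0, ⟨c, hc⟩, hSint⟩ :=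
    exists_reparam_setIntegral_comp_one_sub_exp_neg_eq_zero
      (h := fun u => (((1 - u) / ‖μ - (u : ℂ)‖ ^ 4 : ℝ) : ℂ) * φ u) hk
      (fun u => by simp only [Complex.real_smul, div_eq_mul_inv]; push_cast; ring) hy₁ hy₂ hy₃
      (hspanφ.ofReal_mul (hw y₁ hy₁) (hw y₂ hy₂) (hw y₃ hy₃))
  obtain ⟨hU, hUm, hU0, hUIco, hUtail⟩ := one_sub_exp_neg_comp_profile hS hSm hS0 hc
  exact ⟨_, hU, hUm, hU0, hUIco, hUtail, hSint⟩

end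
end

section
/- Let U_s be an admissible shear flow. Then for every μ ∈ ℂ ∖ [0,1], Φ_inv(μ) = 1/(μ U_s'(0)) + ∫₀¹ g(u)/(u − μ) du, where g(u) := (1−u)² U_s''(U_s⁻¹(u)) / (U_s'(U_s⁻¹(u)))³ for u ∈ (0,1), and the integral on the right-hand side is absolutely convergent. -/
open MeasureTheory Filter Set

noncomputable section

/-!
The function `G(y) = -y(1-U)/(μ-U) - (1-U)²/(U'(μ-U))` is an antiderivative of
`(μ-1)F/(μ-U)² - (1-U)²U''/(U'²(U-μ))`. Since `G(0) = -1/(μU'(0))` and `G → 0` at infinity,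
integrating over `(0,∞)` gives `Φ_inv(μ) = 1/(μU'(0)) + ∫₀^∞ (1-U)²U''/(U'²(U-μ)) dy`, and the
substitution `u = U(y)` turns the last integral into `∫₀¹ g(u)/(u-μ) du`. Every integrand is
dominated by an integrable function because `μ` keeps a positive distance from
`[0,1] ⊇ U([0,∞))`.
-/

lemma exists_pos_le_norm_sub_ofReal {K : Set ℝ} (hK : IsCompact K) {μ : ℂ}
    (hμ : μ ∉ (fun x : ℝ => (x : ℂ)) '' K) : ∃ δ > 0, ∀ x ∈ K, δ ≤ ‖μ - x‖ := by
  have hclosed : IsClosed ((fun x : ℝ => (x : ℂ)) '' K) :=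
    (hK.image Complex.continuous_ofReal).isClosed
  obtain ⟨δ, hδ, hball⟩ := Metric.isOpen_iff.mp hclosed.isOpen_compl μ hμ
  refine ⟨δ, hδ, fun x hx => ?_⟩
  rw [← dist_eq_norm, dist_comm]
  exact not_lt.mp fun h => hball h (mem_image_of_mem _ hx)

lemma integrableOn_div_of_norm_le {s : Set ℝ} (hs : MeasurableSet s) {f d : ℝ → ℂ}
    {b : ℝ → ℝ} {δ : ℝ} (hb : IntegrableOn b s) (hf : ContinuousOn f s) (hd : ContinuousOn d s)
    (hδ : 0 < δ) (hfb : ∀ y ∈ s, ‖f y‖ ≤ b y) (hdδ : ∀ y ∈ s, δ ≤ ‖d y‖) :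
    IntegrableOn (fun y => f y / d y) s := by
  refine (hb.div_const δ).mono' ((hf.div hd fun y hy => ?_).aestronglyMeasurable hs) ?_
  · exact norm_pos_iff.mp (hδ.trans_le (hdδ y hy))
  · refine (ae_restrict_iff' hs).mpr (ae_of_all _ fun y hy => ?_)
    rw [norm_div]
    exact div_le_div₀ ((norm_nonneg _).trans (hfb y hy)) (hfb y hy) hδ (hdδ y hy)

lemma integrableOn_Ioi_mul_deriv {U : ℝ → ℝ} (hU : ContDiff ℝ 1 U)
    (hmono : ∀ y, 0 ≤ y → 0 ≤ deriv U y) (hle : ∀ y, 0 ≤ y → U y ≤ 1)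
    (hint : IntegrableOn (fun y => 1 - U y) (Ioi 0)) :
    IntegrableOn (fun y => y * deriv U y) (Ioi 0) := by
  have hU' : Continuous (deriv U) := hU.continuous_deriv le_rfl
  have hUd : Differentiable ℝ U := hU.differentiable one_ne_zero
  refine integrableOn_Ioi_of_intervalIntegral_norm_bounded (∫ y in Ioi 0, (1 - U y)) 0
    (fun b => (continuous_id.mul hU').integrableOn_Ioc) tendsto_id ?_
  filter_upwards [eventually_ge_atTop 0] with b hb
  have hparts : ∫ y in (0)..b, y * deriv U y = b * (U b - 1) + ∫ y in (0)..b, (1 - U y) := by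
    have := intervalIntegral.integral_mul_deriv_eq_deriv_mul (a := 0) (b := b)
      (u := fun y => y) (u' := fun _ => 1) (v := fun y => U y - 1) (v' := deriv U)
      (fun y _ => hasDerivAt_id y) (fun y _ => (hUd y).hasDerivAt.sub_const 1)
      intervalIntegrable_const (hU'.intervalIntegrable 0 b)
    have hneg : ∫ y in (0)..b, 1 * (U y - 1) = -∫ y in (0)..b, (1 - U y) := by
      rw [← intervalIntegral.integral_neg]
      exact intervalIntegral.integral_congr fun y _ => by ring
    rw [this, hneg]
    ring
  calc ∫ y in (0)..b, ‖y * deriv U y‖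
      = ∫ y in (0)..b, y * deriv U y := by
        refine intervalIntegral.integral_congr fun y hy => ?_
        rw [uIcc_of_le hb] at hy
        exact Real.norm_of_nonneg (mul_nonneg hy.1 (hmono y hy.1))
    _ = b * (U b - 1) + ∫ y in (0)..b, (1 - U y) := hparts
    _ ≤ ∫ y in (0)..b, (1 - U y) := by
        nlinarith [hle b hb]
    _ ≤ ∫ y in Ioi 0, (1 - U y) := by
        rw [intervalIntegral.integral_of_le hb]
        refine setIntegral_mono_set hint ?_ Ioc_subset_Ioi_self.eventuallyLE
        exact (ae_restrict_iff' measurableSet_Ioi).mpr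
          (ae_of_all _ fun y hy => sub_nonneg.mpr (hle y (le_of_lt hy)))

def phiInvIntegrand (U : ℝ → ℝ) (μ : ℂ) (y : ℝ) : ℂ :=
  (μ - 1) * ((srcF U y : ℂ) / (μ - (U y : ℂ)) ^ 2)

def gPullback (U : ℝ → ℝ) (μ : ℂ) (y : ℝ) : ℂ :=
  (((1 - U y) ^ 2 * iteratedDeriv 2 U y / deriv U y ^ 2 : ℝ) : ℂ) / ((U y : ℂ) - μ)

def phiInvPotential (U : ℝ → ℝ) (μ : ℂ) (y : ℝ) : ℂ :=
  -((y : ℂ) * (1 - (U y : ℂ))) / (μ - (U y : ℂ))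
    - (1 - (U y : ℂ)) ^ 2 / (((deriv U y : ℝ) : ℂ) * (μ - (U y : ℂ)))

section Potential

variable {U : ℝ → ℝ} {μ : ℂ}

lemma hasDerivAt_phiInvPotential (hU : ContDiff ℝ 2 U) {y : ℝ} (hμ : μ ≠ U y)
    (hU' : deriv U y ≠ 0) :
    HasDerivAt (phiInvPotential U μ) (phiInvIntegrand U μ y - gPullback U μ y) y := by
  have hUd : HasDerivAt U (deriv U y) y := (hU.differentiable two_ne_zero y).hasDerivAt
  have hU'd : HasDerivAt (deriv U) (iteratedDeriv 2 U y) y := by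
    rw [iteratedDeriv_succ, iteratedDeriv_one]
    exact ((contDiff_succ_iff_deriv (n := 1).mp hU).2.2.differentiable one_ne_zero y).hasDerivAt
  have hUc : HasDerivAt (fun t : ℝ => (U t : ℂ)) ((deriv U y : ℝ) : ℂ) y := hUd.ofReal_comp
  have hid : HasDerivAt (fun t : ℝ => (t : ℂ)) 1 y := by
    simpa using (hasDerivAt_id y).ofReal_comp
  have hμU : μ - U y ≠ 0 := sub_ne_zero.mpr hμ
  have hU'c : ((deriv U y : ℝ) : ℂ) ≠ 0 := Complex.ofReal_ne_zero.mpr hU'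
  have hG := ((hid.mul (hUc.const_sub 1)).neg.div (hUc.const_sub μ) hμU).sub
    (((hUc.const_sub 1).pow 2).div (hU'd.ofReal_comp.mul (hUc.const_sub μ))
      (mul_ne_zero hU'c hμU))
  refine hG.congr_deriv ?_
  simp only [phiInvIntegrand, gPullback, srcF, Pi.mul_apply, Pi.neg_apply, Pi.pow_apply]
  push_cast
  field_simp
  ring

lemma phiInvPotential_zero (h0 : U 0 = 0) :
    phiInvPotential U μ 0 = -(1 / (μ * ((deriv U 0 : ℝ) : ℂ))) := by
  simp only [phiInvPotential, h0]
  push_cast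
  ring

lemma tendsto_phiInvPotential_atTop (h1 : Tendsto U atTop (nhds 1))
    (hr₁ : Tendsto (fun y => (1 - U y) ^ 2 / deriv U y) atTop (nhds 0))
    (hr₂ : Tendsto (fun y => y * (1 - U y)) atTop (nhds 0)) (hμ : μ ≠ 1) :
    Tendsto (phiInvPotential U μ) atTop (nhds 0) := by
  have hinv : Tendsto (fun y => (μ - (U y : ℂ))⁻¹) atTop (nhds (μ - 1)⁻¹) :=
    (tendsto_const_nhds.sub ((Complex.continuous_ofReal.tendsto 1).comp h1)).inv₀
      (sub_ne_zero.mpr hμ)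
  have hr₁' := ((Complex.continuous_ofReal.tendsto 0).comp hr₁).mul hinv
  have hr₂' := ((Complex.continuous_ofReal.tendsto 0).comp hr₂).neg.mul hinv
  simp only [Complex.ofReal_zero, neg_zero, zero_mul] at hr₁' hr₂'
  convert hr₂'.sub hr₁' using 2 with y
  · simp only [phiInvPotential, Function.comp_apply, div_eq_mul_inv, mul_inv]
    push_cast
    ring
  · simp

end Potential

namespace AdmissibleShearFlow

variable {U : ℝ → ℝ} {μ : ℂ}

lemma contDiff_two (hU : AdmissibleShearFlow U) : ContDiff ℝ 2 U :=
  hU.smooth.of_le (by norm_cast)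

lemma continuous_deriv (hU : AdmissibleShearFlow U) : Continuous (deriv U) :=
  hU.contDiff_two.continuous_deriv one_le_two

lemma continuous_iteratedDeriv_two (hU : AdmissibleShearFlow U) :
    Continuous (iteratedDeriv 2 U) :=
  hU.contDiff_two.continuous_iteratedDeriv 2 le_rfl

lemma strictMonoOn (hU : AdmissibleShearFlow U) : StrictMonoOn U (Ici 0) := by
  refine strictMonoOn_of_deriv_pos (convex_Ici 0) hU.contDiff_two.continuous.continuousOn ?_
  rw [interior_Ici]
  exact fun y hy => hU.deriv_pos y (le_of_lt hy)

lemma image_Ioi (hU : AdmissibleShearFlow U) : U '' Ioi 0 = Ioo 0 1 := by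
  refine Subset.antisymm ?_ fun u hu => ?_
  · rintro _ ⟨y, hy, rfl⟩
    refine ⟨?_, (hU.mem_Ico y hy.le).2⟩
    simpa [hU.zero_val] using hU.strictMonoOn self_mem_Ici (mem_Ici.mpr hy.le) hy
  · obtain ⟨Y, hY1, hY0⟩ :=
      ((hU.tendsto_one.eventually_const_lt hu.2).and (eventually_ge_atTop 0)).exists
    obtain ⟨y, hy, rfl⟩ := intermediate_value_Icc hY0 hU.contDiff_two.continuous.continuousOn
      ⟨by simpa [hU.zero_val] using hu.1.le, hY1.le⟩
    refine ⟨y, lt_of_le_of_ne hy.1 ?_, rfl⟩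
    rintro rfl
    exact hu.1.ne' hU.zero_val

lemma shearInv_apply (hU : AdmissibleShearFlow U) {y : ℝ} (hy : 0 ≤ y) :
    shearInv U (U y) = y :=
  hU.strictMonoOn.injOn.leftInvOn_invFunOn hy

lemma exists_pos_le_norm_sub (hU : AdmissibleShearFlow U)
    (hμ : μ ∉ (fun x : ℝ => (x : ℂ)) '' Icc (0:ℝ) 1) :
    ∃ δ > 0, ∀ y, 0 ≤ y → δ ≤ ‖μ - U y‖ := by
  obtain ⟨δ, hδ, hδK⟩ := exists_pos_le_norm_sub_ofReal isCompact_Icc hμ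
  exact ⟨δ, hδ, fun y hy => hδK _ ⟨(hU.mem_Ico y hy).1, (hU.mem_Ico y hy).2.le⟩⟩

lemma integrableOn_phiInvIntegrand (hU : AdmissibleShearFlow U) {δ : ℝ} (hδ : 0 < δ)
    (hδU : ∀ y, 0 ≤ y → δ ≤ ‖μ - U y‖) :
    IntegrableOn (phiInvIntegrand U μ) (Ioi 0) := by
  have hUc := hU.contDiff_two.continuous
  have hU'c := hU.continuous_deriv
  have hsrc : ∀ y, 0 ≤ y → ‖(srcF U y : ℂ)‖ = (1 - U y) + y * deriv U y := by
    intro y hy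
    have hF : 0 ≤ srcF U y := by
      unfold srcF
      nlinarith [(hU.mem_Ico y hy).2, hU.deriv_pos y hy]
    rw [Complex.norm_real, Real.norm_of_nonneg hF, srcF]
  have hxU : IntegrableOn (fun y => y * deriv U y) (Ioi 0) :=
    integrableOn_Ioi_mul_deriv (hU.contDiff_two.of_le one_le_two)
      (fun y hy => (hU.deriv_pos y hy).le) (fun y hy => (hU.mem_Ico y hy).2.le)
      hU.integrable_defect
  refine (integrableOn_div_of_norm_le measurableSet_Ioi (hU.integrable_defect.add hxU)
    (by unfold srcF; fun_prop) (by fun_prop) (pow_pos hδ 2) (fun y hy => (hsrc y hy.le).le)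
    fun y hy => ?_).const_mul (μ - 1)
  rw [norm_pow]
  exact pow_le_pow_left₀ hδ.le (hδU y hy.le) 2

lemma integrableOn_gPullback (hU : AdmissibleShearFlow U) {δ : ℝ} (hδ : 0 < δ)
    (hδU : ∀ y, 0 ≤ y → δ ≤ ‖μ - U y‖) : IntegrableOn (gPullback U μ) (Ioi 0) := by
  have hUc := hU.contDiff_two.continuous
  have hU'c := hU.continuous_deriv
  have hU''c := hU.continuous_iteratedDeriv_two
  refine integrableOn_div_of_norm_le measurableSet_Ioi hU.decay_ratio₃.norm ?_ (by fun_prop) hδ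
    (fun y _ => by rw [Complex.norm_real]) fun y hy => ?_
  · refine Complex.continuous_ofReal.comp_continuousOn
      (ContinuousOn.div (by fun_prop) (by fun_prop) fun y hy => ?_)
    exact pow_ne_zero 2 (hU.deriv_pos y (le_of_lt hy)).ne'
  · rw [norm_sub_rev]
    exact hδU y hy.le

lemma gPullback_eq_abs_deriv_smul (hU : AdmissibleShearFlow U) {y : ℝ} (hy : 0 ≤ y) :
    gPullback U μ y = |deriv U y| • ((gfun U (U y) : ℂ) / ((U y : ℂ) - μ)) := by
  have hU' := (hU.deriv_pos y hy).ne'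
  rw [abs_of_pos (hU.deriv_pos y hy), gfun, hU.shearInv_apply hy, Complex.real_smul, gPullback]
  push_cast
  field_simp

lemma integrableOn_and_integral_gfun_div (hU : AdmissibleShearFlow U)
    (hg : IntegrableOn (gPullback U μ) (Ioi 0)) :
    IntegrableOn (fun u : ℝ => (gfun U u : ℂ) / ((u : ℂ) - μ)) (Ioo 0 1) ∧
      ∫ u in Ioo (0:ℝ) 1, (gfun U u : ℂ) / ((u : ℂ) - μ) =
        ∫ y in Ioi 0, gPullback U μ y := by
  have hderiv : ∀ y ∈ Ioi (0:ℝ), HasDerivWithinAt U (deriv U y) (Ioi 0) y := fun y _ =>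
    (hU.contDiff_two.differentiable two_ne_zero y).hasDerivAt.hasDerivWithinAt
  have hinj : InjOn U (Ioi 0) := hU.strictMonoOn.injOn.mono Ioi_subset_Ici_self
  have hpull : EqOn (gPullback U μ)
      (fun y => |deriv U y| • ((gfun U (U y) : ℂ) / ((U y : ℂ) - μ))) (Ioi 0) :=
    fun y hy => hU.gPullback_eq_abs_deriv_smul (le_of_lt hy)
  rw [← hU.image_Ioi, integrableOn_image_iff_integrableOn_abs_deriv_smul measurableSet_Ioi hderiv
    hinj, integral_image_eq_integral_abs_deriv_smul measurableSet_Ioi hderiv hinj,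
    setIntegral_congr_fun measurableSet_Ioi hpull]
  exact ⟨hg.congr_fun hpull measurableSet_Ioi, rfl⟩

end AdmissibleShearFlow

/-- Lemma (singular integral representation of `Φ_inv`). -/
theorem phiInv_singular_integral (U : ℝ → ℝ) (hU : AdmissibleShearFlow U)
    (μ : ℂ) (hμ : μ ∉ (fun x : ℝ => (x : ℂ)) '' Icc (0:ℝ) 1) :
    IntegrableOn (fun u : ℝ => (gfun U u : ℂ) / ((u : ℂ) - μ)) (Ioo (0:ℝ) 1) ∧
    PhiInv U μ = 1 / (μ * ((deriv U 0 : ℝ) : ℂ))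
      + ∫ u in Ioo (0:ℝ) 1, (gfun U u : ℂ) / ((u : ℂ) - μ) := by
  obtain ⟨δ, hδ, hδU⟩ := hU.exists_pos_le_norm_sub hμ
  have hμU : ∀ y, 0 ≤ y → μ ≠ U y := fun y hy h => by
    simpa [h] using hδ.trans_le (hδU y hy)
  have hμ1 : μ ≠ 1 := fun h => hμ ⟨1, right_mem_Icc.mpr zero_le_one, by simp [h]⟩
  have hΦ := hU.integrableOn_phiInvIntegrand hδ hδU
  have hg := hU.integrableOn_gPullback hδ hδU
  obtain ⟨hint, hchange⟩ := hU.integrableOn_and_integral_gfun_div hg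
  refine ⟨hint, ?_⟩
  have hFTC : ∫ y in Ioi 0, (phiInvIntegrand U μ y - gPullback U μ y)
      = 0 - phiInvPotential U μ 0 :=
    integral_Ioi_of_hasDerivAt_of_tendsto'
      (fun y hy => hasDerivAt_phiInvPotential hU.contDiff_two (hμU y hy)
        (hU.deriv_pos y hy).ne')
      (hΦ.sub hg)
      (tendsto_phiInvPotential_atTop hU.tendsto_one hU.decay_ratio₁ hU.decay_ratio₂ hμ1)
  rw [integral_sub hΦ hg, phiInvPotential_zero hU.zero_val] at hFTC
  rw [hchange, PhiInv, ← integral_const_mul]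
  change ∫ y in Ioi 0, phiInvIntegrand U μ y = _
  linear_combination hFTC

end
end
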